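/- arXiv:2303.11350 — 3 statements merged into one kernel-verified Lean document; each statement's English description precedes it below -/
import Mathlib

section
/- Let D(p) = q·(H_b(p)(1-γ) + α(H_b(β) - H_b(p*β))) with q > 0, α ∈ [0,1], β ∈ (0,1/2], γ ∈ (0,1). If γ ≤ 1 - α(1-2β), then D'(p) ≥ 0 for all p ∈ (0,1/2), and hence D(p) ≥ 0 for all p ∈ [0,1/2]. -/
noncomputable def binEnt (x : ℝ) : ℝ := Real.negMulLog x + Real.negMulLog (1 - x)

noncomputable def binConv (a b : ℝ) : ℝ := a * (1 - b) + (1 - a) * b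

/-!
The derivative of `binEnt` is `log ((1 - x) / x)`, which is nonnegative and decreasing on
`(0, 1/2]`. Since `p ≤ binConv p β ≤ 1/2`, the chain rule gives
`D' = q (log ((1-p)/p) (1-γ) - α (1-2β) log ((1-m)/m))` with `m = binConv p β`, and
`α (1-2β) ≤ 1 - γ` makes the first term dominate. Then `D` is monotone on `[0, 1/2]` and
`D 0 = 0`.
-/

open Real

lemma binEnt_zero : binEnt 0 = 0 := by
  simp [binEnt]

lemma continuous_binEnt : Continuous binEnt := by
  unfold binEnt
  fun_prop

lemma hasDerivAt_binEnt {x : ℝ} (h0 : x ≠ 0) (h1 : x ≠ 1) :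
    HasDerivAt binEnt (log (1 - x) - log x) x := by
  have hcompl : HasDerivAt (fun y => negMulLog (1 - y)) ((-log (1 - x) - 1) * (0 - 1)) x :=
    (hasDerivAt_negMulLog (sub_ne_zero.mpr h1.symm)).comp x
      ((hasDerivAt_const x 1).sub (hasDerivAt_id x))
  exact ((hasDerivAt_negMulLog h0).add hcompl).congr_deriv (by ring)

lemma binConv_zero_left (b : ℝ) : binConv 0 b = b := by
  simp [binConv]

lemma continuous_binConv_left (b : ℝ) : Continuous fun a => binConv a b := by
  unfold binConv
  fun_prop

lemma hasDerivAt_binConv_left (a b : ℝ) :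
    HasDerivAt (fun a => binConv a b) (1 - 2 * b) a := by
  have h := ((hasDerivAt_id a).mul_const (1 - b)).add
    (((hasDerivAt_const a (1 : ℝ)).sub (hasDerivAt_id a)).mul_const b)
  exact h.congr_deriv (by ring)

lemma le_binConv {a b : ℝ} (ha : a ≤ 1 / 2) (hb : 0 ≤ b) : a ≤ binConv a b := by
  unfold binConv
  nlinarith

lemma binConv_le_half {a b : ℝ} (ha : a ≤ 1 / 2) (hb : b ≤ 1 / 2) : binConv a b ≤ 1 / 2 := by
  unfold binConv
  nlinarith

lemma log_one_sub_sub_log_nonneg {x : ℝ} (hx0 : 0 < x) (hx : x ≤ 1 / 2) :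
    0 ≤ log (1 - x) - log x :=
  sub_nonneg.mpr (log_le_log hx0 (by linarith))

lemma log_one_sub_sub_log_le_of_le {x y : ℝ} (hx : 0 < x) (hxy : x ≤ y) (hy : y < 1) :
    log (1 - y) - log y ≤ log (1 - x) - log x := by
  have h1 : log (1 - y) ≤ log (1 - x) := log_le_log (by linarith) (by linarith)
  have h2 : log x ≤ log y := log_le_log hx hxy
  linarith

lemma hasDerivAt_binEnt_binConv {a b : ℝ} (h0 : binConv a b ≠ 0) (h1 : binConv a b ≠ 1) :
    HasDerivAt (fun a => binEnt (binConv a b))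
      ((log (1 - binConv a b) - log (binConv a b)) * (1 - 2 * b)) a := by
  exact (hasDerivAt_binEnt h0 h1).comp a (hasDerivAt_binConv_left a b)

noncomputable def entropyGap (q α γ β p : ℝ) : ℝ :=
  q * (binEnt p * (1 - γ) + α * (binEnt β - binEnt (binConv p β)))

lemma entropyGap_zero (q α γ β : ℝ) : entropyGap q α γ β 0 = 0 := by
  simp [entropyGap, binEnt_zero, binConv_zero_left]

lemma continuous_entropyGap (q α γ β : ℝ) : Continuous (entropyGap q α γ β) := by
  have := continuous_binConv_left β
  have := continuous_binEnt
  unfold entropyGap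
  fun_prop

lemma hasDerivAt_entropyGap (q α γ β : ℝ) {p : ℝ} (hp0 : p ≠ 0) (hp1 : p ≠ 1)
    (hm0 : binConv p β ≠ 0) (hm1 : binConv p β ≠ 1) :
    HasDerivAt (entropyGap q α γ β)
      (q * ((log (1 - p) - log p) * (1 - γ)
        - α * ((log (1 - binConv p β) - log (binConv p β)) * (1 - 2 * β)))) p := by
  have h := (((hasDerivAt_binEnt hp0 hp1).mul_const (1 - γ)).add
    (((hasDerivAt_const p (binEnt β)).sub
      (hasDerivAt_binEnt_binConv hm0 hm1)).const_mul α)).const_mul q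
  exact h.congr_deriv (by ring)

lemma entropyGap_deriv_nonneg {q α γ β p : ℝ} (hq : 0 ≤ q) (hα : 0 ≤ α) (hβ0 : 0 ≤ β)
    (hβ1 : β ≤ 1 / 2) (hcond : γ ≤ 1 - α * (1 - 2 * β)) (hp0 : 0 < p) (hp : p ≤ 1 / 2) :
    0 ≤ q * ((log (1 - p) - log p) * (1 - γ)
      - α * ((log (1 - binConv p β) - log (binConv p β)) * (1 - 2 * β))) := by
  set m := binConv p β
  have hpm : p ≤ m := le_binConv hp hβ0
  have hLm := log_one_sub_sub_log_nonneg (hp0.trans_le hpm) (binConv_le_half hp hβ1)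
  have hLpm := log_one_sub_sub_log_le_of_le hp0 hpm (by linarith [binConv_le_half hp hβ1])
  have hweight : 0 ≤ α * (1 - 2 * β) := mul_nonneg hα (by linarith)
  have hdom : α * ((log (1 - m) - log m) * (1 - 2 * β)) ≤ (log (1 - p) - log p) * (1 - γ) :=
    calc α * ((log (1 - m) - log m) * (1 - 2 * β))
        = α * (1 - 2 * β) * (log (1 - m) - log m) := by ring
      _ ≤ (1 - γ) * (log (1 - m) - log m) := mul_le_mul_of_nonneg_right (by linarith) hLm
      _ ≤ (1 - γ) * (log (1 - p) - log p) := mul_le_mul_of_nonneg_left hLpm (by linarith)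
      _ = (log (1 - p) - log p) * (1 - γ) := by ring
  exact mul_nonneg hq (by linarith)

theorem D_nonneg_of_gamma_le_general (q α γ β : ℝ) (hq : 0 < q) (hα : α ∈ Set.Icc (0:ℝ) 1)
    (hβ : β ∈ Set.Ioc (0:ℝ) (1/2))
    (hcond : γ ≤ 1 - α * (1 - 2 * β))
    (D : ℝ → ℝ)
    (hD : ∀ p, D p = q * (binEnt p * (1 - γ) + α * (binEnt β - binEnt (binConv p β)))) :
    (∀ p ∈ Set.Ioo (0:ℝ) (1/2), 0 ≤ deriv D p) ∧
    (∀ p ∈ Set.Icc (0:ℝ) (1/2), 0 ≤ D p) := by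
  obtain ⟨hα0, -⟩ := hα
  obtain ⟨hβ0, hβ1⟩ := hβ
  obtain rfl : D = entropyGap q α γ β := funext hD
  have hslope : ∀ p ∈ Set.Ioo (0:ℝ) (1/2),
      ∃ d, 0 ≤ d ∧ HasDerivAt (entropyGap q α γ β) d p := by
    rintro p ⟨hp0, hp⟩
    have hpm := le_binConv hp.le hβ0.le
    have hm := binConv_le_half hp.le hβ1
    exact ⟨_, entropyGap_deriv_nonneg hq.le hα0 hβ0.le hβ1 hcond hp0 hp.le,
      hasDerivAt_entropyGap q α γ β hp0.ne' (by linarith) (by linarith) (by linarith)⟩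
  have hderiv_nonneg : ∀ p ∈ Set.Ioo (0:ℝ) (1/2), 0 ≤ deriv (entropyGap q α γ β) p := by
    intro p hp
    obtain ⟨d, hd, h⟩ := hslope p hp
    rwa [h.deriv]
  refine ⟨hderiv_nonneg, fun p hp => ?_⟩
  have hmono : MonotoneOn (entropyGap q α γ β) (Set.Icc 0 (1/2)) := by
    refine monotoneOn_of_deriv_nonneg (convex_Icc _ _)
      (continuous_entropyGap q α γ β).continuousOn ?_ (by rwa [interior_Icc])
    rw [interior_Icc]
    intro x hx
    obtain ⟨d, -, h⟩ := hslope x hx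
    exact h.differentiableAt.differentiableWithinAt
  simpa [entropyGap_zero] using hmono ⟨le_rfl, by norm_num⟩ hp hp.1

theorem D_nonneg_of_gamma_le (q α γ β : ℝ) (hq : 0 < q) (hα : α ∈ Set.Icc (0:ℝ) 1)
    (hβ : β ∈ Set.Ioc (0:ℝ) (1/2)) (hγ : γ ∈ Set.Ioo (0:ℝ) 1)
    (hcond : γ ≤ 1 - α * (1 - 2 * β))
    (D : ℝ → ℝ)
    (hD : ∀ p, D p = q * (binEnt p * (1 - γ) + α * (binEnt β - binEnt (binConv p β)))) :
    (∀ p ∈ Set.Ioo (0:ℝ) (1/2), 0 ≤ deriv D p) ∧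
    (∀ p ∈ Set.Icc (0:ℝ) (1/2), 0 ≤ D p) :=
  D_nonneg_of_gamma_le_general q α γ β hq hα hβ hcond D hD
end

section
/- For 0 < c < 1, the function g(p) = 1/(((1-p)/p)^c + 1) is concave in p on (0, 1/2]. -/
set_option maxHeartbeats 1000000

lemma g_hasDerivAt (c p : ℝ) (hp0 : 0 < p) (hp1 : p < 1) :
    HasDerivAt (fun p : ℝ => (((1 - p) / p) ^ c + 1)⁻¹)
      (c * ((1-p)/p)^(c-1) / (p^2 * (((1-p)/p)^c + 1)^2)) p := by
  have hu0 : 0 < (1 - p) / p := div_pos (by linarith) hp0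
  have hu : HasDerivAt (fun p : ℝ => (1 - p) / p) ((-1 * p - (1 - p) * 1) / p ^ 2) p :=
    ((hasDerivAt_id p).const_sub 1).div (hasDerivAt_id p) hp0.ne'
  have hr := hu.rpow_const (p := c) (Or.inl hu0.ne')
  have hne : ((1 - p) / p) ^ c + 1 ≠ 0 := by positivity
  have H := (hr.add_const 1).inv hne
  refine H.congr_deriv ?_
  have hB : (0:ℝ) < ((1-p)/p)^(c-1) := Real.rpow_pos_of_pos hu0 _
  field_simp
  ring

lemma g_hasDerivAt2 (c p : ℝ) (hp0 : 0 < p) (hp1 : p < 1) :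
    HasDerivAt (fun p : ℝ => c * ((1-p)/p)^(c-1) / (p^2 * (((1-p)/p)^c + 1)^2))
      ((c * (((1-p)/p)^c + 1) * ((1-p)/p)^(c-2) * (2*c*((1-p)/p)^c - (((1-p)/p)^c + 1)*(1+c-2*p)))
        / (p^2 * (((1-p)/p)^c + 1)^2)^2) p := by
  have hu0 : 0 < (1 - p) / p := div_pos (by linarith) hp0
  have hu : HasDerivAt (fun p : ℝ => (1 - p) / p) ((-1 * p - (1 - p) * 1) / p ^ 2) p :=
    ((hasDerivAt_id p).const_sub 1).div (hasDerivAt_id p) hp0.ne'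
  have hN := (hu.rpow_const (p := c - 1) (Or.inl hu0.ne')).const_mul c
  have hr := hu.rpow_const (p := c) (Or.inl hu0.ne')
  have hne : ((1 - p) / p) ^ c + 1 ≠ 0 := by positivity
  have hD := (hasDerivAt_pow 2 p).mul ((hr.add_const 1).pow 2)
  have hDne : p ^ 2 * (((1 - p) / p) ^ c + 1) ^ 2 ≠ 0 := by positivity
  have H := hN.div hD hDne
  refine H.congr_deriv ?_
  have hB : ((1-p)/p)^(c-1) = ((1-p)/p)^(c-2) * ((1-p)/p) := by
    rw [← Real.rpow_add_one hu0.ne', show c-2+1 = c-1 by ring]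
  have hA : ((1-p)/p)^c = ((1-p)/p)^(c-2) * ((1-p)/p) * ((1-p)/p) := by
    rw [← hB, ← Real.rpow_add_one hu0.ne', show c-1+1 = c by ring]
  simp only [Pi.mul_apply, Pi.pow_apply, Nat.cast_ofNat, Nat.reduceSub, pow_one]
  rw [show c - 1 - 1 = c - 2 by ring, hA, hB]
  have hX : ((1-p)/p)^(c-2) * ((1-p)/p) * ((1-p)/p) + 1 ≠ 0 := by positivity
  generalize ((1 - p) / p) ^ (c - 2) = w at hX ⊢
  field_simp
  ring

lemma g_key_ineq (c p : ℝ) (hc0 : 0 < c) (hc1 : c < 1) (hp0 : 0 < p) (hp2 : p ≤ 1/2) :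
    2 * c * ((1-p)/p)^c ≤ (((1-p)/p)^c + 1) * (1 + c - 2*p) := by
  have hu1 : (1:ℝ) ≤ (1-p)/p := (le_div_iff₀ hp0).2 (by linarith)
  set u := (1-p)/p with hu_def
  set v := u ^ c with hv_def
  have hv1 : (1:ℝ) ≤ v := Real.one_le_rpow hu1 hc0.le
  have hvu : v ≤ u := by
    calc v ≤ u ^ (1:ℝ) := Real.rpow_le_rpow_of_exponent_le hu1 hc1.le
    _ = u := Real.rpow_one u
  have hpu : p * u = 1 - p := by
    rw [hu_def]; field_simp
  rcases le_or_gt 0 (1 - c - 2*p) with h | h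
  · nlinarith [mul_nonneg h (by linarith : (0:ℝ) ≤ v)]
  · have h1 : u * (1 - c - 2*p) ≤ v * (1 - c - 2*p) :=
      mul_le_mul_of_nonpos_right hvu (by linarith)
    have h2 : 0 ≤ p * (u * (1 - c - 2*p) + (1 + c - 2*p)) := by
      nlinarith [mul_nonneg (by linarith : (0:ℝ) ≤ 1 - c) (by linarith : (0:ℝ) ≤ 1 - 2*p)]
    have h3 : 0 ≤ u * (1 - c - 2*p) + (1 + c - 2*p) :=
      nonneg_of_mul_nonneg_right h2 hp0
    nlinarith

theorem g_concave (c : ℝ) (hc : c ∈ Set.Ioo (0:ℝ) 1) :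
    ConcaveOn ℝ (Set.Ioc (0:ℝ) (1/2))
      (fun p : ℝ => (((1 - p) / p) ^ c + 1)⁻¹) := by
  obtain ⟨hc0, hc1⟩ := hc
  refine concaveOn_of_hasDerivWithinAt2_nonpos
    (f' := fun p => c * ((1-p)/p)^(c-1) / (p^2 * (((1-p)/p)^c + 1)^2))
    (f'' := fun p => (c * (((1-p)/p)^c + 1) * ((1-p)/p)^(c-2) *
        (2*c*((1-p)/p)^c - (((1-p)/p)^c + 1)*(1+c-2*p)))
        / (p^2 * (((1-p)/p)^c + 1)^2)^2)
    (convex_Ioc _ _) ?_ ?_ ?_ ?_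
  · -- continuity
    have h1 : ContinuousOn (fun p : ℝ => (1 - p) / p) (Set.Ioc (0:ℝ) (1/2)) :=
      (continuousOn_const.sub continuousOn_id).div continuousOn_id
        (fun x hx => ne_of_gt hx.1)
    have h2 : ContinuousOn (fun p : ℝ => ((1 - p) / p) ^ c + 1) (Set.Ioc (0:ℝ) (1/2)) :=
      (h1.rpow_const (fun x _ => Or.inr hc0.le)).add continuousOn_const
    exact h2.inv₀ (fun x hx => by
      have hu : (0:ℝ) ≤ (1 - x) / x := (div_pos (by linarith [hx.2]) hx.1).le
      have := Real.rpow_nonneg hu c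
      intro h; linarith [h ▸ this])
  · intro x hx
    rw [interior_Ioc] at hx
    exact (g_hasDerivAt c x hx.1 (by linarith [hx.2])).hasDerivWithinAt
  · intro x hx
    rw [interior_Ioc] at hx
    exact (g_hasDerivAt2 c x hx.1 (by linarith [hx.2])).hasDerivWithinAt
  · intro x hx
    rw [interior_Ioc] at hx
    have hx0 := hx.1
    have hx2 : x ≤ 1/2 := hx.2.le
    have hu0 : 0 < (1 - x) / x := div_pos (by linarith) hx0
    have hkey := g_key_ineq c x hc0 hc1 hx0 hx2
    have hnum : c * (((1-x)/x)^c + 1) * ((1-x)/x)^(c-2) *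
        (2*c*((1-x)/x)^c - (((1-x)/x)^c + 1)*(1+c-2*x)) ≤ 0 := by
      apply mul_nonpos_of_nonneg_of_nonpos
      · have h1 : (0:ℝ) < ((1-x)/x)^c + 1 := by positivity
        have h2 : (0:ℝ) < ((1-x)/x)^(c-2) := Real.rpow_pos_of_pos hu0 _
        positivity
      · linarith
    have hden : (0:ℝ) < (x^2 * (((1-x)/x)^c + 1)^2)^2 := by positivity
    exact div_nonpos_of_nonpos_of_nonneg hnum hden.le
end

section
/- Let (S₁,S₂) be binary with joint distribution P(0,0)=1-q, P(1,1)=qα, P(0,1)=0, P(1,0)=q(1-α), and X ~ Bern(p) independent of (S₁,S₂); set Y₁=S₁·X, Y₂=S₂·X. Then H(Y₁,S₁|Y₂,S₂) - H(S₁|Y₁,Y₂,S₂,X) = q(1-α)·H_b(p) + p(1-qα)·H_b(q(1-α)/(1-qα)), where entropies use natural logarithm (assume qα < 1). -/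
/-- Bernoulli pmf on `Bool`. -/
noncomputable def bern (p : ℝ) : Bool → ℝ := fun b => if b then p else 1 - p

/-- Joint pmf of the state pair `(S₁,S₂)`:
`P(0,0) = 1-q`, `P(1,1) = qα`, `P(0,1) = 0`, `P(1,0) = q(1-α)`. -/
noncomputable def pS (q α : ℝ) : Bool → Bool → ℝ :=
  fun s1 s2 =>
    match s1, s2 with
    | false, false => 1 - q
    | true, true => q * α
    | false, true => 0
    | true, false => q * (1 - α)

/-- Joint pmf of `(S₁,S₂,X)` with `X ~ Bern p` independent of `(S₁,S₂)`. -/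
noncomputable def J (p q α : ℝ) : Bool → Bool → Bool → ℝ :=
  fun s1 s2 x => pS q α s1 s2 * bern p x

/-- `P(Y₁ = y1, S₁ = s1, Y₂ = y2, S₂ = s2)` where `Y₁ = S₁ ⋅ X`, `Y₂ = S₂ ⋅ X`. -/
noncomputable def P4 (p q α : ℝ) (y1 s1 y2 s2 : Bool) : ℝ :=
  ∑ a : Bool, ∑ b : Bool, ∑ x : Bool,
    J p q α a b x * (if y1 = (a && x) ∧ s1 = a ∧ y2 = (b && x) ∧ s2 = b then 1 else 0)

/-- `P(Y₂ = y2, S₂ = s2)`. -/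
noncomputable def P2 (p q α : ℝ) (y2 s2 : Bool) : ℝ :=
  ∑ a : Bool, ∑ b : Bool, ∑ x : Bool,
    J p q α a b x * (if y2 = (b && x) ∧ s2 = b then 1 else 0)

/-- `P(S₁ = s1, Y₁ = y1, Y₂ = y2, S₂ = s2, X = x)`. -/
noncomputable def P5 (p q α : ℝ) (s1 y1 y2 s2 x : Bool) : ℝ :=
  ∑ a : Bool, ∑ b : Bool, ∑ x' : Bool,
    J p q α a b x' *
      (if s1 = a ∧ y1 = (a && x') ∧ y2 = (b && x') ∧ s2 = b ∧ x = x' then 1 else 0)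

/-- `P(Y₁ = y1, Y₂ = y2, S₂ = s2, X = x)`. -/
noncomputable def Q4 (p q α : ℝ) (y1 y2 s2 x : Bool) : ℝ :=
  ∑ a : Bool, ∑ b : Bool, ∑ x' : Bool,
    J p q α a b x' *
      (if y1 = (a && x') ∧ y2 = (b && x') ∧ s2 = b ∧ x = x' then 1 else 0)

/-- Conditional entropy `H(Y₁,S₁ | Y₂,S₂)`. -/
noncomputable def HY1S1givenY2S2 (p q α : ℝ) : ℝ :=
  -∑ a : Bool, ∑ b : Bool, ∑ x : Bool,
    J p q α a b x *
      Real.log (P4 p q α (a && x) a (b && x) b / P2 p q α (b && x) b)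

/-- Conditional entropy `H(S₁ | Y₁,Y₂,S₂,X)`. -/
noncomputable def HS1givenY1Y2S2X (p q α : ℝ) : ℝ :=
  -∑ a : Bool, ∑ b : Bool, ∑ x : Bool,
    J p q α a b x *
      Real.log (P5 p q α a (a && x) (b && x) b x / Q4 p q α (a && x) (b && x) b x)

open Real

/-! Given `S₂ = 1`, the variables `S₁`, `Y₁` and `X` are all determined by `(Y₂, S₂)`, so both
conditional entropies live on the event `S₂ = 0`, of probability `1 - qα`. There `Y₁ = S₁ X`, and
the grouping rule gives `H(Y₁,S₁|Y₂,S₂) = (1 - qα) H_b(q(1-α)/(1-qα)) + q(1-α) H_b(p)`, while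
`S₁` stays uncertain given `(Y₁,Y₂,S₂,X)` only when `X = 0`, so that
`H(S₁|Y₁,Y₂,S₂,X) = (1-p)(1-qα) H_b(q(1-α)/(1-qα))`. -/

lemma neg_mul_log_div_of_le {u s : ℝ} (hu : 0 ≤ u) (hus : u ≤ s) :
    -(u * log (u / s)) = negMulLog u + u * log s := by
  rcases hu.eq_or_lt with rfl | hu
  · simp
  · rw [log_div hu.ne' (hu.trans_le hus).ne', negMulLog]
    ring

lemma mul_binEnt_div {a b s : ℝ} (h : a + b = s) :
    s * binEnt (b / s) = negMulLog a + negMulLog b - negMulLog s := by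
  rcases eq_or_ne s 0 with rfl | hs
  · rw [eq_neg_of_add_eq_zero_right h]
    simp [negMulLog, log_neg_eq_log]
  · obtain ⟨x, rfl, rfl⟩ : ∃ x, a = x * s ∧ b = (1 - x) * s :=
      ⟨a / s, by field_simp, by field_simp; linarith⟩
    rw [mul_div_cancel_right₀ _ hs, binEnt, sub_sub_cancel, negMulLog_mul, negMulLog_mul]
    ring

section

variable {p q α : ℝ}

lemma HY1S1givenY2S2_eq (hp0 : 0 ≤ p) (hp1 : p ≤ 1) (hA : 0 ≤ 1 - q) (hB : 0 ≤ q * (1 - α)) :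
    HY1S1givenY2S2 p q α =
      q * (1 - α) * binEnt p + (1 - q * α) * binEnt (q * (1 - α) / (1 - q * α)) := by
  have hbin : binEnt p = negMulLog p + negMulLog (1 - p) := rfl
  have hneg : negMulLog (1 - q * α) = -(1 - q * α) * log (1 - q * α) := rfl
  unfold HY1S1givenY2S2 P4 P2 J pS bern
  norm_num [Fintype.sum_bool]
  rw [show q * (1 - α) * p + q * (1 - α) * (1 - p) + ((1 - q) * p + (1 - q) * (1 - p)) =
      1 - q * α by ring, show (1 - q) * p + (1 - q) * (1 - p) = 1 - q by ring]
  linear_combination neg_mul_log_div_of_le hA (by linarith : 1 - q ≤ 1 - q * α)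
    + neg_mul_log_div_of_le (by positivity : 0 ≤ q * (1 - α) * (1 - p))
      (by nlinarith : q * (1 - α) * (1 - p) ≤ 1 - q * α)
    + neg_mul_log_div_of_le (by positivity : 0 ≤ q * (1 - α) * p)
      (by nlinarith : q * (1 - α) * p ≤ 1 - q * α)
    + negMulLog_mul (q * (1 - α)) (1 - p) + negMulLog_mul (q * (1 - α)) p
    - mul_binEnt_div (show 1 - q + q * (1 - α) = 1 - q * α by ring)
    - q * (1 - α) * hbin + hneg

lemma HS1givenY1Y2S2X_eq (hp1 : p ≤ 1) (hA : 0 ≤ 1 - q) (hB : 0 ≤ q * (1 - α)) :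
    HS1givenY1Y2S2X p q α =
      (1 - p) * (1 - q * α) * binEnt (q * (1 - α) / (1 - q * α)) := by
  have hneg : negMulLog ((1 - q * α) * (1 - p)) =
      -((1 - q * α) * (1 - p)) * log ((1 - q * α) * (1 - p)) := rfl
  have hp : 0 ≤ 1 - p := by linarith
  unfold HS1givenY1Y2S2X P5 Q4 J pS bern
  norm_num [Fintype.sum_bool]
  rw [show q * (1 - α) * (1 - p) + (1 - q) * (1 - p) = (1 - q * α) * (1 - p) by ring]
  linear_combination neg_mul_log_div_of_le (by positivity : 0 ≤ (1 - q) * (1 - p))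
      (by nlinarith : (1 - q) * (1 - p) ≤ (1 - q * α) * (1 - p))
    + neg_mul_log_div_of_le (by positivity : 0 ≤ q * (1 - α) * (1 - p))
      (by nlinarith : q * (1 - α) * (1 - p) ≤ (1 - q * α) * (1 - p))
    + negMulLog_mul (1 - q) (1 - p) + negMulLog_mul (q * (1 - α)) (1 - p)
    - negMulLog_mul (1 - q * α) (1 - p)
    - (1 - p) * mul_binEnt_div (show 1 - q + q * (1 - α) = 1 - q * α by ring)
    + hneg

end

theorem entropy_difference_eq_general (p q α : ℝ) (hp : p ∈ Set.Icc (0:ℝ) 1)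
    (hq : q ∈ Set.Icc (0:ℝ) 1) (hα : α ∈ Set.Icc (0:ℝ) 1) :
    HY1S1givenY2S2 p q α - HS1givenY1Y2S2X p q α =
      q * (1 - α) * binEnt p + p * (1 - q * α) * binEnt (q * (1 - α) / (1 - q * α)) := by
  have hA : 0 ≤ 1 - q := sub_nonneg.mpr hq.2
  have hB : 0 ≤ q * (1 - α) := mul_nonneg hq.1 (sub_nonneg.mpr hα.2)
  rw [HY1S1givenY2S2_eq hp.1 hp.2 hA hB, HS1givenY1Y2S2X_eq hp.2 hA hB]
  ring

theorem entropy_difference_eq (p q α : ℝ) (hp : p ∈ Set.Icc (0:ℝ) 1)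
    (hq : q ∈ Set.Icc (0:ℝ) 1) (hα : α ∈ Set.Icc (0:ℝ) 1) (hqα : q * α < 1) :
    HY1S1givenY2S2 p q α - HS1givenY1Y2S2X p q α =
      q * (1 - α) * binEnt p + p * (1 - q * α) * binEnt (q * (1 - α) / (1 - q * α)) :=
  entropy_difference_eq_general p q α hp hq hα
end
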